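/- Let (A_m)_{m∈ℤ∖{0}} be complex numbers with Σ_{m≠0} |A_m|/|m| < ∞, and define B(ζ) := −(1/(πi))·Σ_{m∈ℤ∖{0}} A_m/(ζ − 2πim) for ζ ∉ 2πiℤ. Then for every y ∈ ℂ with Re(y) > 0, ∫₀^∞ e^{−ζ/y} B(ζ) dζ = −2·Σ_{m∈ℤ∖{0}} A_m e₁(−m/y), and for every y with Re(y) < 0, ∫₀^{−∞} e^{−ζ/y} B(ζ) dζ = −2·Σ_{m∈ℤ∖{0}} A_m e₁(−m/y), where the Laplace integrals are taken along the positive and negative real axes respectively. -/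

import Mathlib

noncomputable section

open Complex Filter Topology

/-- `e₁(z) = (1/2πi) ∫₀^∞ e^{-2πt}/(t + iz) dt`. -/
def e1 (z : ℂ) : ℂ :=
  1 / (2 * Real.pi * I) *
    ∫ t in Set.Ioi (0 : ℝ), Complex.exp (-2 * Real.pi * t) / ((t : ℂ) + I * z)

/-!
For `Re w > 0`, `Re α ≥ 0`, `Re β > 0`, writing `1/(αt + β) = ∫₀^∞ e^{-(αt+β)u} du` and swapping
the order of integration gives the symmetry
`∫₀^∞ e^{-wt}/(αt + β) dt = ∫₀^∞ e^{-βu}/(w + αu) du`.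
With `α = i/m`, `β = 2π` it identifies `∫₀^∞ e^{-t/y}/(t - 2πim) dt` with `2πi e₁(-m/y)`, with no
contour rotation. Since `|t - 2πim| ≥ 2π|m|`, the hypothesis `Σ |A_m|/|m| < ∞` lets the series
for `B` be integrated term by term. The negative axis reduces to the positive one through
`ζ ↦ -ζ`, `m ↦ -m`, `y ↦ -y`.
-/

open MeasureTheory Set

theorem integral_Ioi_cexp_neg_mul {a : ℂ} (ha : 0 < a.re) :
    ∫ t : ℝ in Ioi 0, cexp (-(a * t)) = a⁻¹ := by
  have h := integral_exp_mul_complex_Ioi (a := -a) (by simpa using ha) 0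
  simp only [neg_mul, ofReal_zero, mul_zero, Complex.exp_zero] at h
  rw [h, neg_div_neg_eq, one_div]

theorem integrable_prod_Ioi_cexp_mul_cexp {w α β : ℂ} (hw : 0 < w.re) (hα : 0 ≤ α.re) (hβ : 0 < β.re) :
    Integrable (fun p : ℝ × ℝ => cexp (-(w * p.1)) * cexp (-((α * p.1 + β) * p.2)))
      ((volume.restrict (Ioi 0)).prod (volume.restrict (Ioi 0))) := by
  refine ((exp_neg_integrableOn_Ioi 0 hw).mul_prod (exp_neg_integrableOn_Ioi 0 hβ)).mono'
    (by fun_prop) ?_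
  rw [Measure.prod_restrict, ae_restrict_iff' (measurableSet_Ioi.prod measurableSet_Ioi)]
  refine ae_of_all _ fun ⟨t, u⟩ ⟨(ht : 0 < t), (hu : 0 < u)⟩ => ?_
  simp only [norm_mul, Complex.norm_exp]
  gcongr <;> simp
  nlinarith [mul_nonneg (mul_nonneg hα ht.le) hu.le]

theorem integral_Ioi_cexp_div_affine_comm {w α β : ℂ} (hw : 0 < w.re) (hα : 0 ≤ α.re) (hβ : 0 < β.re) :
    ∫ t : ℝ in Ioi 0, cexp (-(w * t)) / (α * t + β) =
      ∫ u : ℝ in Ioi 0, cexp (-(β * u)) / (w + α * u) := by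
  have inner_u : ∀ t ∈ Ioi (0 : ℝ), cexp (-(w * t)) / (α * t + β) =
      ∫ u : ℝ in Ioi 0, cexp (-(w * t)) * cexp (-((α * t + β) * u)) := by
    intro t (ht : 0 < t)
    rw [integral_const_mul, integral_Ioi_cexp_neg_mul, div_eq_mul_inv]
    simp only [add_re, mul_re, ofReal_re, ofReal_im, mul_zero, sub_zero]
    nlinarith [mul_nonneg hα ht.le]
  have inner_t : ∀ u ∈ Ioi (0 : ℝ), cexp (-(β * u)) / (w + α * u) =
      ∫ t : ℝ in Ioi 0, cexp (-(w * t)) * cexp (-((α * t + β) * u)) := by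
    intro u (hu : 0 < u)
    have hre : 0 < (w + α * u).re := by
      simp only [add_re, mul_re, ofReal_re, ofReal_im, mul_zero, sub_zero]
      nlinarith [mul_nonneg hα hu.le]
    calc cexp (-(β * u)) / (w + α * u)
        = cexp (-(β * u)) * ∫ t : ℝ in Ioi 0, cexp (-((w + α * u) * t)) := by
          rw [integral_Ioi_cexp_neg_mul hre, div_eq_mul_inv]
      _ = _ := by
          rw [← integral_const_mul]
          congr 1 with t
          rw [← Complex.exp_add, ← Complex.exp_add]
          ring_nf
  rw [setIntegral_congr_fun measurableSet_Ioi inner_u,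
    setIntegral_congr_fun measurableSet_Ioi inner_t]
  exact integral_integral_swap (integrable_prod_Ioi_cexp_mul_cexp hw hα hβ)

theorem two_pi_mul_abs_le_norm_sub (t m : ℝ) :
    2 * Real.pi * |m| ≤ ‖(t : ℂ) - 2 * Real.pi * I * m‖ := by
  have him : ((t : ℂ) - 2 * Real.pi * I * m).im = -(2 * Real.pi * m) := by simp
  calc 2 * Real.pi * |m| = |((t : ℂ) - 2 * Real.pi * I * m).im| := by
        rw [him, abs_neg, abs_mul, abs_of_pos Real.two_pi_pos]
    _ ≤ _ := abs_im_le_norm _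

theorem integral_Ioi_cexp_div_sub_eq_e1 {m : ℝ} (hm : m ≠ 0) {w : ℂ} (hw : 0 < w.re) :
    ∫ t : ℝ in Ioi 0, cexp (-(w * t)) / (t - 2 * Real.pi * I * m) =
      2 * Real.pi * I * e1 (-m * w) := by
  have hπ : (Real.pi : ℂ) ≠ 0 := ofReal_ne_zero.mpr Real.pi_ne_zero
  have hm' : (m : ℂ) ≠ 0 := ofReal_ne_zero.mpr hm
  have lhs : ∀ t : ℝ, cexp (-(w * t)) / (t - 2 * Real.pi * I * m) =
      I / m * (cexp (-(w * t)) / (I / m * t + (2 * Real.pi : ℝ))) := by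
    intro t
    have h1 : (t : ℂ) - 2 * Real.pi * I * m ≠ 0 := fun h => by
      have := two_pi_mul_abs_le_norm_sub t m
      rw [h, norm_zero] at this
      nlinarith [Real.pi_pos, abs_pos.mpr hm]
    have h2 : I / m * t + ((2 * Real.pi : ℝ) : ℂ) ≠ 0 := by
      intro h; have := congrArg Complex.re h; simp at this
    rw [mul_div_assoc', div_eq_div_iff h1 h2]
    push_cast
    field_simp
    ring_nf
    simp only [I_sq]
    ring
  have rhs : ∀ s : ℝ, cexp (-2 * Real.pi * s) / (s + I * (-m * w)) =
      I / m * (cexp (-(((2 * Real.pi : ℝ) : ℂ) * s)) / (w + I / m * s)) := by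
    intro s
    have h1 : (s : ℂ) + I * (-m * w) ≠ 0 := by
      intro h; have := congrArg Complex.im h; simp at this
      exact this.elim hm hw.ne'
    have h2 : w + I / m * s ≠ 0 := by
      intro h; have := congrArg Complex.re h; simp at this; linarith
    rw [mul_div_assoc', div_eq_div_iff h1 h2]
    push_cast
    field_simp
    ring_nf
    simp only [I_sq]
    ring
  have hα : 0 ≤ (I / m).re := by simp
  rw [e1, ← mul_assoc, one_div, mul_inv_cancel₀ (by simp [hπ]), one_mul]
  simp_rw [lhs, rhs, integral_const_mul]
  rw [integral_Ioi_cexp_div_affine_comm hw hα (by simpa using Real.two_pi_pos)]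

theorem norm_cexp_div_sub_le {m : ℝ} (hm : m ≠ 0) (w : ℂ) (t : ℝ) :
    ‖cexp (-(w * t)) / (t - 2 * Real.pi * I * m)‖ ≤
      |m|⁻¹ * ((2 * Real.pi)⁻¹ * Real.exp (-w.re * t)) := by
  have hpos : 0 < 2 * Real.pi * |m| := mul_pos Real.two_pi_pos (abs_pos.mpr hm)
  rw [norm_div, Complex.norm_exp, div_le_iff₀ (hpos.trans_le (two_pi_mul_abs_le_norm_sub t m))]
  calc Real.exp (-(w * t)).re
      = |m|⁻¹ * ((2 * Real.pi)⁻¹ * Real.exp (-w.re * t)) * (2 * Real.pi * |m|) := by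
        field_simp; simp
    _ ≤ _ := by gcongr; exact two_pi_mul_abs_le_norm_sub t m

theorem integral_Ioi_tsum_mul_cexp_div_sub {ι : Type*} [Countable ι] (A : ι → ℂ) (μ : ι → ℝ)
    (hμ : ∀ i, μ i ≠ 0) (hA : Summable fun i => ‖A i‖ / |μ i|) {w : ℂ} (hw : 0 < w.re) :
    ∫ t : ℝ in Ioi 0, ∑' i, A i * (cexp (-(w * t)) / (t - 2 * Real.pi * I * μ i)) =
      2 * Real.pi * I * ∑' i, A i * e1 (-μ i * w) := by
  set F : ι → ℝ → ℂ := fun i t => A i * (cexp (-(w * t)) / (t - 2 * Real.pi * I * μ i))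
  set g : ℝ → ℝ := fun t => (2 * Real.pi)⁻¹ * Real.exp (-w.re * t)
  have g_int : IntegrableOn g (Ioi 0) := (exp_neg_integrableOn_Ioi 0 hw).const_mul _
  have F_le : ∀ i t, ‖F i t‖ ≤ ‖A i‖ / |μ i| * g t := fun i t => by
    calc ‖F i t‖ ≤ ‖A i‖ * (|μ i|⁻¹ * g t) :=
          (norm_mul _ _).trans_le <| by gcongr; exact norm_cexp_div_sub_le (hμ i) w t
      _ = _ := by ring
  have F_int : ∀ i, IntegrableOn (F i) (Ioi 0) := fun i =>
    (g_int.const_mul _).mono' (by fun_prop) (ae_of_all _ (F_le i))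
  have F_sum : Summable fun i => ∫ t in Ioi 0, ‖F i t‖ := by
    refine .of_nonneg_of_le (fun i => integral_nonneg fun t => norm_nonneg _) (fun i => ?_)
      (hA.mul_right (∫ t in Ioi 0, g t))
    rw [← integral_const_mul]
    exact integral_mono_of_nonneg (ae_of_all _ fun t => norm_nonneg _) (g_int.const_mul _)
      (ae_of_all _ (F_le i))
  have integral_F : ∀ i, ∫ t in Ioi 0, F i t = 2 * Real.pi * I * (A i * e1 (-μ i * w)) := by
    intro i
    rw [integral_const_mul, integral_Ioi_cexp_div_sub_eq_e1 (hμ i) hw]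
    ring
  rw [← integral_tsum_of_summable_integral_norm F_int F_sum, tsum_congr integral_F, tsum_mul_left]

theorem integral_Ioi_cexp_neg_div_mul_tsum_div_sub {ι : Type*} [Countable ι] (A : ι → ℂ)
    (μ : ι → ℝ) (hμ : ∀ i, μ i ≠ 0) (hA : Summable fun i => ‖A i‖ / |μ i|) {y : ℂ}
    (hy : 0 < y.re) :
    ∫ t : ℝ in Ioi 0, cexp (-(t : ℂ) / y) *
        (-(1 / (Real.pi * I)) * ∑' i, A i / (t - 2 * Real.pi * I * μ i)) =
      -2 * ∑' i, A i * e1 (-μ i / y) := by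
  have hw : 0 < (y⁻¹).re := by
    rw [inv_re]; exact div_pos hy (normSq_pos.mpr (by rintro rfl; simp at hy))
  have integrand_eq : ∀ t : ℝ, cexp (-(t : ℂ) / y) *
      (-(1 / (Real.pi * I)) * ∑' i, A i / (t - 2 * Real.pi * I * μ i)) =
      -(1 / (Real.pi * I)) * ∑' i, A i * (cexp (-(y⁻¹ * t)) / (t - 2 * Real.pi * I * μ i)) := by
    intro t
    rw [← tsum_mul_left, ← tsum_mul_left, ← tsum_mul_left, show -(t : ℂ) / y = -(y⁻¹ * t) by ring]
    exact tsum_congr fun i => by ring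
  simp_rw [integrand_eq, integral_const_mul, integral_Ioi_tsum_mul_cexp_div_sub A μ hμ hA hw,
    div_eq_mul_inv _ y]
  field_simp [Real.pi_ne_zero]

/-- Laplace transforms of `B(ζ) = -(1/πi) Σ_{m≠0} A_m/(ζ - 2πim)` along
the positive and negative real axes are given by `-2 Σ_{m≠0} A_m e₁(-m/y)` for
`Re(y) > 0` and `Re(y) < 0` respectively. -/
theorem stmt9 (A : {m : ℤ // m ≠ 0} → ℂ)
    (hA : Summable fun m : {m : ℤ // m ≠ 0} => ‖A m‖ / |((m.1 : ℤ) : ℝ)|) :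
    -- Laplace integral along the positive real axis, for Re(y) > 0
    (∀ y : ℂ, 0 < y.re →
      (∫ t in Set.Ioi (0 : ℝ), Complex.exp (-(t : ℂ) / y) *
          (-(1 / (Real.pi * I)) *
            ∑' m : {m : ℤ // m ≠ 0}, A m / ((t : ℂ) - 2 * Real.pi * I * (m.1 : ℂ))))
        = -2 * ∑' m : {m : ℤ // m ≠ 0}, A m * e1 (-(m.1 : ℂ) / y)) ∧
    -- Laplace integral along the negative real axis (ζ = -t), for Re(y) < 0
    (∀ y : ℂ, y.re < 0 →
      (-∫ t in Set.Ioi (0 : ℝ), Complex.exp ((t : ℂ) / y) *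
          (-(1 / (Real.pi * I)) *
            ∑' m : {m : ℤ // m ≠ 0}, A m / (-(t : ℂ) - 2 * Real.pi * I * (m.1 : ℂ))))
        = -2 * ∑' m : {m : ℤ // m ≠ 0}, A m * e1 (-(m.1 : ℂ) / y)) := by
  have hm : ∀ m : {m : ℤ // m ≠ 0}, ((m.1 : ℤ) : ℝ) ≠ 0 := fun m => Int.cast_ne_zero.mpr m.2
  refine ⟨fun y hy => ?_, fun y hy => ?_⟩
  · simpa using integral_Ioi_cexp_neg_div_mul_tsum_div_sub A (fun m => (m.1 : ℝ)) hm hA hy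
  · have h := integral_Ioi_cexp_neg_div_mul_tsum_div_sub A (fun m => -(m.1 : ℝ))
      (fun m => neg_ne_zero.mpr (hm m)) (by simpa only [abs_neg] using hA)
      (show 0 < (-y).re by simpa using hy)
    have integrand : ∀ t : ℝ, cexp ((t : ℂ) / y) * (-(1 / (Real.pi * I)) *
        ∑' m : {m : ℤ // m ≠ 0}, A m / (-(t : ℂ) - 2 * Real.pi * I * (m.1 : ℂ))) =
        -(cexp (-(t : ℂ) / -y) * (-(1 / (Real.pi * I)) *
          ∑' m : {m : ℤ // m ≠ 0}, A m / ((t : ℂ) - 2 * Real.pi * I * ((-(m.1 : ℝ) : ℝ) : ℂ)))) := by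
      intro t
      have reflect : ∀ m : {m : ℤ // m ≠ 0}, A m / (-(t : ℂ) - 2 * Real.pi * I * (m.1 : ℂ)) =
          -(A m / ((t : ℂ) - 2 * Real.pi * I * ((-(m.1 : ℝ) : ℝ) : ℂ))) := fun m => by
        rw [← div_neg]; push_cast; ring_nf
      rw [tsum_congr reflect, tsum_neg, neg_div_neg_eq]
      ring
    simp_rw [integrand, integral_neg, neg_neg, h, neg_div_neg_eq, ofReal_neg, ofReal_intCast]
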